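/- For two distributions with weights (λ, 1−λ), the Jensen–Shannon divergence JS_{(λ,1−λ)}(p,q) is bounded above by λ(1−λ)·(D_KL(p‖q) + D_KL(q‖p)) when all divergences are finite; in particular JS with uniform weights is bounded by one quarter of the symmetrized KL divergence. -/
import Mathlib


open Real BigOperators

/-- Kullback-Leibler divergence on a finite set (convention: terms with `p x = 0` vanish). -/
noncomputable def KL {X : Type*} [Fintype X] (p q : X → ℝ) : ℝ :=
  ∑ x, p x * Real.log (p x / q x)

/-- Shannon entropy of a (finitely supported) distribution. -/
noncomputable def Hent {X : Type*} [Fintype X] (p : X → ℝ) : ℝ :=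
  -∑ x, p x * Real.log (p x)

/-- Jensen–Shannon divergence of `p 1, …, p l` with weights `w`. -/
noncomputable def JS {X : Type*} [Fintype X] {l : ℕ} (w : Fin l → ℝ) (p : Fin l → X → ℝ) : ℝ :=
  ∑ i, w i * KL (p i) (fun x => ∑ j, w j * p j x)

/-- `p` is a probability mass function on the finite set `X`. -/
def IsPMF {X : Type*} [Fintype X] (p : X → ℝ) : Prop :=
  (∀ x, 0 ≤ p x) ∧ ∑ x, p x = 1

lemma key_pt (a b lam : ℝ) (ha : 0 ≤ a) (hb : 0 ≤ b) (hab : 0 < a ↔ 0 < b)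
    (hl0 : 0 ≤ lam) (hl1 : lam ≤ 1) :
    lam * (a * Real.log (a / (lam * a + (1 - lam) * b))) +
      (1 - lam) * (b * Real.log (b / (lam * a + (1 - lam) * b))) ≤
    lam * (1 - lam) * (a * Real.log (a / b) + b * Real.log (b / a)) := by
  rcases eq_or_lt_of_le ha with h0 | hapos
  · have hb0 : b = 0 := by
      by_contra h
      exact absurd (hab.2 (lt_of_le_of_ne hb (Ne.symm h))) (by rw [← h0]; exact lt_irrefl 0)
    simp [← h0, hb0]
  · have hbpos : 0 < b := hab.1 hapos
    have hm : 0 < lam * a + (1 - lam) * b := by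
      rcases le_total a b with h | h
      · nlinarith
      · nlinarith
    have hcon : lam * Real.log a + (1 - lam) * Real.log b ≤
        Real.log (lam * a + (1 - lam) * b) := by
      have := (strictConcaveOn_log_Ioi.concaveOn).2 (Set.mem_Ioi.2 hapos)
        (Set.mem_Ioi.2 hbpos) hl0 (show (0:ℝ) ≤ 1 - lam by linarith) (by ring)
      simpa [smul_eq_mul] using this
    have h1 : Real.log a - Real.log (lam * a + (1 - lam) * b) ≤
        (1 - lam) * (Real.log a - Real.log b) := by nlinarith
    have h2 : Real.log b - Real.log (lam * a + (1 - lam) * b) ≤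
        lam * (Real.log b - Real.log a) := by nlinarith
    rw [Real.log_div (ne_of_gt hapos) (ne_of_gt hm), Real.log_div (ne_of_gt hbpos) (ne_of_gt hm),
      Real.log_div (ne_of_gt hapos) (ne_of_gt hbpos), Real.log_div (ne_of_gt hbpos) (ne_of_gt hapos)]
    nlinarith [mul_le_mul_of_nonneg_left h1 (mul_nonneg hl0 ha),
      mul_le_mul_of_nonneg_left h2 (mul_nonneg (by linarith : (0:ℝ) ≤ 1 - lam) hb)]

lemma js_aux {X : Type*} [Fintype X] (p q : X → ℝ) (lam : ℝ)
    (hp : IsPMF p) (hq : IsPMF q) (hsupp : ∀ x, 0 < p x ↔ 0 < q x)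
    (hl0 : 0 ≤ lam) (hl1 : lam ≤ 1) :
    JS ![lam, 1 - lam] ![p, q] ≤ lam * (1 - lam) * (KL p q + KL q p) := by
  have hJS : JS ![lam, 1 - lam] ![p, q] =
      ∑ x, (lam * (p x * Real.log (p x / (lam * p x + (1 - lam) * q x))) +
        (1 - lam) * (q x * Real.log (q x / (lam * p x + (1 - lam) * q x)))) := by
    simp [JS, KL, Fin.sum_univ_two, Finset.mul_sum, Finset.sum_add_distrib]
  have hRHS : lam * (1 - lam) * (KL p q + KL q p) =
      ∑ x, lam * (1 - lam) * (p x * Real.log (p x / q x) + q x * Real.log (q x / p x)) := by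
    simp [KL, Finset.mul_sum, ← Finset.sum_add_distrib]
  rw [hJS, hRHS]
  exact Finset.sum_le_sum fun x _ => key_pt (p x) (q x) lam (hp.1 x) (hq.1 x) (hsupp x) hl0 hl1

/-- for two distributions with weights `(λ, 1−λ)`,
`JS ≤ λ(1−λ)(D_KL(p‖q) + D_KL(q‖p))`; in particular, with uniform weights JS is
bounded by one quarter of the symmetrized KL divergence. -/
theorem js_two_le_symmetrized_kl {X : Type*} [Fintype X] (p q : X → ℝ) (lam : ℝ)
    (hp : IsPMF p) (hq : IsPMF q) (hsupp : ∀ x, 0 < p x ↔ 0 < q x)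
    (hl0 : 0 ≤ lam) (hl1 : lam ≤ 1) :
    JS ![lam, 1 - lam] ![p, q] ≤ lam * (1 - lam) * (KL p q + KL q p) ∧
    JS ![(1:ℝ)/2, 1/2] ![p, q] ≤ (KL p q + KL q p) / 4 := by
  refine ⟨js_aux p q lam hp hq hsupp hl0 hl1, ?_⟩
  have h := js_aux p q (1/2) hp hq hsupp (by norm_num) (by norm_num)
  have e : (1:ℝ) - 1/2 = 1/2 := by norm_num
  rw [e] at h
  linarith
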